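/- Let k(z,z) = (1 - |θ(z)|²)/(1 - |z|²) where θ is a holomorphic self-map of the unit disk. Then for all z in the open unit disk, Δ k(z,z) ≥ 4 (|z| - |θ(z)|)² (1 - |θ(z)|²)/(1 - |z|²)³. -/

import Mathlib

/-- The planar Laplacian `Δu = ∂²u/∂x² + ∂²u/∂y²` of `u : ℂ → ℝ` at `z = x + iy`. -/
noncomputable def planarLaplacian (u : ℂ → ℝ) (z : ℂ) : ℝ :=
  deriv (fun x : ℝ => deriv (fun x' : ℝ => u ((x' : ℂ) + z.im * Complex.I)) x) z.re +
  deriv (fun y : ℝ => deriv (fun y' : ℝ => u ((z.re : ℂ) + y' * Complex.I)) y) z.im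

/-!
Write `k = A / B` with `A = 1 - |θ|²` and `B = 1 - |z|²`. The second-order quotient rule along
horizontal and vertical lines gives `Δk`; the `θ''` contributions of the two directions cancel,
leaving `Δk / 4 = (1 + |z|²) A / B³ - 2 Re (z θ̄ θ') / B² - |θ'|² / B`. With
`Re (z θ̄ θ') ≤ |z| |θ| |θ'|` and the Schwarz–Pick inequality `D := |θ'| B ≤ A`, the difference
with `(|z| - |θ|)² A / B³` is at least `(A - D) (A + D + 2 |z| |θ|) / B³ ≥ 0`. Schwarz–Pick for
maps into the closed disk reduces to the open disk, since otherwise `θ` is constant by the maximum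
modulus principle.
-/

open Complex Metric Set Filter Topology ComplexConjugate
open scoped RealInnerProductSpace

theorem deriv_deriv_div {𝕜 : Type*} [NontriviallyNormedField 𝕜] {a b a' b' : 𝕜 → 𝕜}
    {x a'' b'' : 𝕜} (ha : ∀ᶠ y in 𝓝 x, HasDerivAt a (a' y) y)
    (hb : ∀ᶠ y in 𝓝 x, HasDerivAt b (b' y) y) (ha' : HasDerivAt a' a'' x)
    (hb' : HasDerivAt b' b'' x) (hbx : b x ≠ 0) :
    deriv (fun y => deriv (fun y => a y / b y) y) x =
      a'' / b x - 2 * a' x * b' x / b x ^ 2 - a x * b'' / b x ^ 2 +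
        2 * a x * b' x ^ 2 / b x ^ 3 := by
  have hb0 : ∀ᶠ y in 𝓝 x, b y ≠ 0 := hb.self_of_nhds.continuousAt.eventually_ne hbx
  have hderiv : deriv (fun y => a y / b y) =ᶠ[𝓝 x]
      fun y => (a' y * b y - a y * b' y) / b y ^ 2 := by
    filter_upwards [ha, hb, hb0] with y hay hby hby0
    exact (hay.div hby hby0).deriv
  have hnum := (ha'.mul hb.self_of_nhds).sub (ha.self_of_nhds.mul hb')
  have hquot : HasDerivAt (fun y => (a' y * b y - a y * b' y) / b y ^ 2)
      ((((a'' * b x + a' x * b' x - (a' x * b' x + a x * b'')) * b x ^ 2 -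
        (a' x * b x - a x * b' x) * (2 * b x ^ (2 - 1) * b' x)) / (b x ^ 2) ^ 2)) x :=
    hnum.div (hb.self_of_nhds.pow 2) (pow_ne_zero 2 hbx)
  rw [hderiv.deriv_eq, hquot.deriv]
  field_simp
  ring

theorem one_sub_norm_sq_ne_zero {E : Type*} [SeminormedAddCommGroup E] {x : E} (hx : ‖x‖ ≠ 1) :
    1 - ‖x‖ ^ 2 ≠ 0 := by
  rwa [sub_ne_zero, ne_comm, Ne, pow_eq_one_iff_of_nonneg (norm_nonneg _) two_ne_zero]

section Curve

variable {F : Type*} [NormedAddCommGroup F] [InnerProductSpace ℝ F]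

theorem HasDerivAt.two_mul_inner_deriv {γ γ' : ℝ → F} {γ'' : F} {s : ℝ}
    (hγ : HasDerivAt γ (γ' s) s) (hγ' : HasDerivAt γ' γ'' s) :
    HasDerivAt (fun t => 2 * ⟪γ t, γ' t⟫) (2 * (⟪γ s, γ''⟫ + ‖γ' s‖ ^ 2)) s := by
  simpa [real_inner_self_eq_norm_sq] using (hγ.inner ℝ hγ').const_mul 2

variable {E : Type*} [NormedAddCommGroup E] [InnerProductSpace ℝ E]

theorem deriv_deriv_one_sub_norm_sq_div {γ γ' : ℝ → F} {c : ℝ → E} {γ'' : F} {v : E} {s : ℝ}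
    (hγ : ∀ᶠ t in 𝓝 s, HasDerivAt γ (γ' t) t) (hγ' : HasDerivAt γ' γ'' s)
    (hc : ∀ᶠ t in 𝓝 s, HasDerivAt c v t) (hcs : ‖c s‖ ≠ 1) :
    deriv (fun x => deriv (fun t => (1 - ‖γ t‖ ^ 2) / (1 - ‖c t‖ ^ 2)) x) s =
      -2 * (⟪γ s, γ''⟫ + ‖γ' s‖ ^ 2) / (1 - ‖c s‖ ^ 2)
        - 8 * ⟪γ s, γ' s⟫ * ⟪c s, v⟫ / (1 - ‖c s‖ ^ 2) ^ 2
        + 2 * (1 - ‖γ s‖ ^ 2) * ‖v‖ ^ 2 / (1 - ‖c s‖ ^ 2) ^ 2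
        + 8 * (1 - ‖γ s‖ ^ 2) * ⟪c s, v⟫ ^ 2 / (1 - ‖c s‖ ^ 2) ^ 3 := by
  have ha : ∀ᶠ t in 𝓝 s, HasDerivAt (fun t => 1 - ‖γ t‖ ^ 2) (-(2 * ⟪γ t, γ' t⟫)) t := by
    filter_upwards [hγ] with t ht
    simpa using ht.norm_sq.const_sub 1
  have hb : ∀ᶠ t in 𝓝 s, HasDerivAt (fun t => 1 - ‖c t‖ ^ 2) (-(2 * ⟪c t, v⟫)) t := by
    filter_upwards [hc] with t ht
    simpa using ht.norm_sq.const_sub 1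
  have hb' := (hc.self_of_nhds.two_mul_inner_deriv (γ' := fun _ => v) (hasDerivAt_const s v)).neg
  rw [deriv_deriv_div ha hb (hγ.self_of_nhds.two_mul_inner_deriv hγ').neg hb'
    (one_sub_norm_sq_ne_zero hcs)]
  simp only [inner_zero_right, zero_add]
  ring

end Curve

theorem deriv_deriv_kernel_comp_line {θ : ℂ → ℂ} {c : ℝ → ℂ} {v : ℂ} {s : ℝ}
    (hθ : ∀ᶠ w in 𝓝 (c s), DifferentiableAt ℂ θ w) (hc : ∀ t, HasDerivAt c v t)
    (hcs : ‖c s‖ ≠ 1) :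
    deriv (fun x => deriv (fun t => (1 - ‖θ (c t)‖ ^ 2) / (1 - ‖c t‖ ^ 2)) x) s =
      -2 * (⟪θ (c s), deriv (deriv θ) (c s) * v * v⟫ + ‖deriv θ (c s) * v‖ ^ 2) / (1 - ‖c s‖ ^ 2)
        - 8 * ⟪θ (c s), deriv θ (c s) * v⟫ * ⟪c s, v⟫ / (1 - ‖c s‖ ^ 2) ^ 2
        + 2 * (1 - ‖θ (c s)‖ ^ 2) * ‖v‖ ^ 2 / (1 - ‖c s‖ ^ 2) ^ 2
        + 8 * (1 - ‖θ (c s)‖ ^ 2) * ⟪c s, v⟫ ^ 2 / (1 - ‖c s‖ ^ 2) ^ 3 := by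
  have hγ : ∀ᶠ t in 𝓝 s, HasDerivAt (fun t => θ (c t)) (deriv θ (c t) * v) t := by
    filter_upwards [(hc s).continuousAt.eventually hθ] with t ht
    exact ht.hasDerivAt.comp t (hc t)
  have hγ' : HasDerivAt (fun t => deriv θ (c t) * v) (deriv (deriv θ) (c s) * v * v) s :=
    ((analyticAt_iff_eventually_differentiableAt.mpr hθ).deriv.differentiableAt.hasDerivAt.comp
      s (hc s)).mul_const v
  exact deriv_deriv_one_sub_norm_sq_div (γ := fun t => θ (c t)) (γ' := fun t => deriv θ (c t) * v)
    (c := c) (v := v) hγ hγ' (.of_forall hc) hcs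

theorem planarLaplacian_diag_kernel {θ : ℂ → ℂ} {z : ℂ} (hθ : ∀ᶠ w in 𝓝 z, DifferentiableAt ℂ θ w)
    (hz : ‖z‖ ≠ 1) :
    planarLaplacian (fun w => (1 - ‖θ w‖ ^ 2) / (1 - ‖w‖ ^ 2)) z =
      4 * ((1 + ‖z‖ ^ 2) * (1 - ‖θ z‖ ^ 2) / (1 - ‖z‖ ^ 2) ^ 3
        - 2 * (z * conj (θ z) * deriv θ z).re / (1 - ‖z‖ ^ 2) ^ 2
        - ‖deriv θ z‖ ^ 2 / (1 - ‖z‖ ^ 2)) := by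
  have hx : ∀ t : ℝ, HasDerivAt (fun x : ℝ => (x : ℂ) + z.im * I) 1 t := fun t =>
    (hasDerivAt_id t).ofReal_comp.add_const _
  have hy : ∀ t : ℝ, HasDerivAt (fun y : ℝ => (z.re : ℂ) + y * I) I t := fun t => by
    simpa using ((hasDerivAt_id t).ofReal_comp.mul_const I).const_add (z.re : ℂ)
  have hxz : (z.re : ℂ) + z.im * I = z := re_add_im z
  rw [← hxz] at hθ hz
  rw [planarLaplacian, deriv_deriv_kernel_comp_line (c := fun x : ℝ => (x : ℂ) + z.im * I) hθ hx hz,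
    deriv_deriv_kernel_comp_line (c := fun y : ℝ => (z.re : ℂ) + y * I) hθ hy hz]
  simp only [hxz] at hz ⊢
  have hB := one_sub_norm_sq_ne_zero hz
  have hnz : ‖z‖ ^ 2 = z.re ^ 2 + z.im ^ 2 := by rw [Complex.sq_norm, normSq_apply]; ring
  simp only [Complex.inner, norm_mul, norm_one, norm_I, mul_one, mul_re, mul_im, conj_re, conj_im,
    one_re, one_im, I_re, I_im]
  field_simp
  rw [hnz]
  ring

noncomputable def blaschkeFactor (a w : ℂ) : ℂ := (a - w) / (1 - conj a * w)

@[simp] theorem blaschkeFactor_self (a : ℂ) : blaschkeFactor a a = 0 := by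
  simp [blaschkeFactor]

@[simp] theorem blaschkeFactor_zero (a : ℂ) : blaschkeFactor a 0 = a := by
  simp [blaschkeFactor]

theorem one_sub_conj_mul_ne_zero {a w : ℂ} (ha : ‖a‖ < 1) (hw : ‖w‖ < 1) :
    1 - conj a * w ≠ 0 := by
  have : ‖conj a * w‖ < 1 := by
    rw [norm_mul, norm_conj]
    nlinarith [norm_nonneg a, norm_nonneg w]
  intro h
  rw [← sub_eq_zero.mp h, norm_one] at this
  exact lt_irrefl _ this

theorem normSq_one_sub_conj_mul_sub_normSq_sub (a w : ℂ) :
    normSq (1 - conj a * w) - normSq (a - w) = (1 - normSq a) * (1 - normSq w) := by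
  simp only [normSq_apply, sub_re, sub_im, mul_re, mul_im, conj_re, conj_im, one_re, one_im]
  ring

theorem mapsTo_blaschkeFactor {a : ℂ} (ha : ‖a‖ < 1) :
    MapsTo (blaschkeFactor a) (ball 0 1) (ball 0 1) := by
  intro w hw
  rw [mem_ball_zero_iff] at hw ⊢
  rw [blaschkeFactor, norm_div, div_lt_one (norm_pos_iff.mpr (one_sub_conj_mul_ne_zero ha hw)),
    ← sq_lt_sq₀ (norm_nonneg _) (norm_nonneg _), ← normSq_eq_norm_sq, ← normSq_eq_norm_sq,
    ← sub_pos, normSq_one_sub_conj_mul_sub_normSq_sub, normSq_eq_norm_sq, normSq_eq_norm_sq]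
  apply mul_pos <;> nlinarith [norm_nonneg a, norm_nonneg w]

theorem hasDerivAt_blaschkeFactor {a w : ℂ} (h : 1 - conj a * w ≠ 0) :
    HasDerivAt (blaschkeFactor a) ((normSq a - 1) / (1 - conj a * w) ^ 2) w := by
  have hnum : HasDerivAt (fun v : ℂ => a - v) (-1) w := by
    simpa using (hasDerivAt_id w).const_sub a
  have hden : HasDerivAt (fun v : ℂ => 1 - conj a * v) (-conj a) w := by
    simpa using ((hasDerivAt_id w).const_mul (conj a)).const_sub 1
  refine (hnum.div hden h).congr_deriv ?_
  rw [← mul_conj]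
  ring

theorem differentiableOn_blaschkeFactor {a : ℂ} (ha : ‖a‖ < 1) :
    DifferentiableOn ℂ (blaschkeFactor a) (ball 0 1) := fun _ hw =>
  (hasDerivAt_blaschkeFactor (one_sub_conj_mul_ne_zero ha (mem_ball_zero_iff.mp hw)))
    |>.differentiableAt.differentiableWithinAt

theorem norm_deriv_mul_le_of_mapsTo_ball {f : ℂ → ℂ} (hd : DifferentiableOn ℂ f (ball 0 1))
    (hm : MapsTo f (ball 0 1) (ball 0 1)) {z : ℂ} (hz : z ∈ ball 0 1) :
    ‖deriv f z‖ * (1 - ‖z‖ ^ 2) ≤ 1 - ‖f z‖ ^ 2 := by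
  have hz' : ‖z‖ < 1 := mem_ball_zero_iff.mp hz
  have hfz : ‖f z‖ < 1 := mem_ball_zero_iff.mp (hm hz)
  set g := blaschkeFactor (f z) ∘ f ∘ blaschkeFactor z
  have hg : HasDerivAt g ((normSq (f z) - 1) / (1 - conj (f z) * f z) ^ 2 *
      (deriv f z * ((normSq z - 1) / (1 - conj z * 0) ^ 2))) 0 := by
    refine HasDerivAt.comp 0 ?_ (HasDerivAt.comp 0 ?_ (hasDerivAt_blaschkeFactor (by simp)))
    · simpa using hasDerivAt_blaschkeFactor (one_sub_conj_mul_ne_zero hfz hfz)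
    · simpa using (hd.differentiableAt (isOpen_ball.mem_nhds hz)).hasDerivAt
  have hschwarz : ‖deriv g 0‖ ≤ 1 := by
    have hmaps : MapsTo g (ball 0 1) (ball 0 1) :=
      (mapsTo_blaschkeFactor hfz).comp (hm.comp (mapsTo_blaschkeFactor hz'))
    have hdiff : DifferentiableOn ℂ g (ball 0 1) :=
      (differentiableOn_blaschkeFactor hfz).comp
        (hd.comp (differentiableOn_blaschkeFactor hz') (mapsTo_blaschkeFactor hz'))
        (hm.comp (mapsTo_blaschkeFactor hz'))
    have hg0 : g 0 = 0 := by simp [g]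
    simpa using Complex.norm_deriv_le_div_of_mapsTo_ball hdiff
      (by rw [hg0]; exact hmaps.mono_right ball_subset_closedBall) one_pos
  have hpos : 0 < 1 - ‖f z‖ ^ 2 := by nlinarith [norm_nonneg (f z)]
  have hderiv : deriv g 0 = deriv f z * (((1 - ‖z‖ ^ 2) / (1 - ‖f z‖ ^ 2) : ℝ) : ℂ) := by
    rw [hg.deriv, ← normSq_eq_conj_mul_self, normSq_eq_norm_sq, normSq_eq_norm_sq]
    have : (1 - ‖f z‖ ^ 2 : ℂ) ≠ 0 := by exact_mod_cast hpos.ne'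
    push_cast
    field_simp
    ring
  have hquot : 0 ≤ (1 - ‖z‖ ^ 2) / (1 - ‖f z‖ ^ 2) :=
    div_nonneg (by nlinarith [norm_nonneg z]) hpos.le
  rw [hderiv, norm_mul, norm_real, Real.norm_of_nonneg hquot, mul_div_assoc',
    div_le_one hpos] at hschwarz
  exact hschwarz

theorem norm_deriv_mul_le_of_norm_le_one {f : ℂ → ℂ} (hd : DifferentiableOn ℂ f (ball 0 1))
    (hf : ∀ w ∈ ball (0 : ℂ) 1, ‖f w‖ ≤ 1) {z : ℂ} (hz : z ∈ ball 0 1) :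
    ‖deriv f z‖ * (1 - ‖z‖ ^ 2) ≤ 1 - ‖f z‖ ^ 2 := by
  by_cases hlt : ∀ w ∈ ball (0 : ℂ) 1, ‖f w‖ < 1
  · exact norm_deriv_mul_le_of_mapsTo_ball hd (fun w hw => mem_ball_zero_iff.mpr (hlt w hw)) hz
  push Not at hlt
  obtain ⟨w, hw, hfw⟩ := hlt
  have hmax : IsMaxOn (norm ∘ f) (ball 0 1) w := fun u hu => (hf u hu).trans hfw
  have hconst : f =ᶠ[𝓝 z] fun _ => f w :=
    Filter.eventually_of_mem (isOpen_ball.mem_nhds hz) <|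
      Complex.eqOn_of_isPreconnected_of_isMaxOn_norm (convex_ball 0 1).isPreconnected
        isOpen_ball hd hw hmax
  rw [hconst.deriv_eq, deriv_const, norm_zero, zero_mul, sub_nonneg]
  exact pow_le_one₀ (norm_nonneg _) (hf z hz)

theorem sq_sub_mul_le_kernel_laplacian {r t d ρ : ℝ} (hr : 0 ≤ r) (ht : 0 ≤ t) (hr1 : r < 1)
    (hd : 0 ≤ d) (hρ : ρ ≤ r * t * d) (hpick : d * (1 - r ^ 2) ≤ 1 - t ^ 2) :
    (r - t) ^ 2 * (1 - t ^ 2) / (1 - r ^ 2) ^ 3 ≤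
      (1 + r ^ 2) * (1 - t ^ 2) / (1 - r ^ 2) ^ 3 - 2 * ρ / (1 - r ^ 2) ^ 2
        - d ^ 2 / (1 - r ^ 2) := by
  have hB : 0 < 1 - r ^ 2 := by nlinarith
  have hD : 0 ≤ d * (1 - r ^ 2) := mul_nonneg hd hB.le
  have key : (r - t) ^ 2 * (1 - t ^ 2) ≤
      (1 + r ^ 2) * (1 - t ^ 2) - 2 * ρ * (1 - r ^ 2) - (d * (1 - r ^ 2)) ^ 2 := by
    nlinarith [mul_nonneg (sub_nonneg.mpr hpick)
      (by nlinarith [mul_nonneg hr ht] : 0 ≤ (1 - t ^ 2) + d * (1 - r ^ 2) + 2 * r * t),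
      mul_le_mul_of_nonneg_right hρ hB.le]
  calc (r - t) ^ 2 * (1 - t ^ 2) / (1 - r ^ 2) ^ 3
      ≤ ((1 + r ^ 2) * (1 - t ^ 2) - 2 * ρ * (1 - r ^ 2) - (d * (1 - r ^ 2)) ^ 2) /
          (1 - r ^ 2) ^ 3 := by gcongr
    _ = _ := by field_simp

/-- Lower bound for the Laplacian of the diagonal reproducing kernel
`k(z,z) = (1-|θ(z)|²)/(1-|z|²)`:
`Δ k(z,z) ≥ 4 (|z|-|θ(z)|)² (1-|θ(z)|²)/(1-|z|²)³`. -/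
theorem laplacian_diag_kernel_lower
    (θ : ℂ → ℂ) (hθ : DifferentiableOn ℂ θ (Metric.ball 0 1))
    (hb : ∀ z ∈ Metric.ball (0:ℂ) 1, ‖θ z‖ ≤ 1) :
    ∀ z ∈ Metric.ball (0:ℂ) 1,
      4 * (‖z‖ - ‖θ z‖) ^ 2 * (1 - ‖θ z‖ ^ 2) / (1 - ‖z‖ ^ 2) ^ 3 ≤
        planarLaplacian (fun w => (1 - ‖θ w‖ ^ 2) / (1 - ‖w‖ ^ 2)) z := by
  intro z hz
  have hz1 : ‖z‖ < 1 := mem_ball_zero_iff.mp hz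
  have hθz : ∀ᶠ w in 𝓝 z, DifferentiableAt ℂ θ w :=
    eventually_of_mem (isOpen_ball.mem_nhds hz) fun w hw =>
      hθ.differentiableAt (isOpen_ball.mem_nhds hw)
  have hre : (z * conj (θ z) * deriv θ z).re ≤ ‖z‖ * ‖θ z‖ * ‖deriv θ z‖ := by
    simpa only [norm_mul, norm_conj] using re_le_norm (z * conj (θ z) * deriv θ z)
  rw [planarLaplacian_diag_kernel hθz hz1.ne, mul_assoc, mul_div_assoc]
  gcongr
  exact sq_sub_mul_le_kernel_laplacian (norm_nonneg _) (norm_nonneg _) hz1 (norm_nonneg _) hre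
    (norm_deriv_mul_le_of_norm_le_one hθ hb hz)
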